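/- For k ≥ r ≥ 3 and m, m' ≥ 0, let π be a partition in C_=(k,r|m). Then π is a partition in C_<(k,r|m') if and only if m < m'. -/

import Mathlib

/-!
Let `π ∈ C_=(k,r|p,t)`. Consecutive entries of a row of `GG(π)` differ by at least `2`, and by at
least `3` above an even entry.

If also `π ∈ C_<(k,r|p',t')`, then `t < t'` because `2t+1` is a part. Were `p' + t' ≤ p + t`, the
bounds `π^{(2)}_{p'+1} ≤ 2t'` and `π^{(2)}_p ≥ 2t+2` would force all gaps between these entries to
be `2` and `π^{(2)}_p = 2t+2`. For `t' ≥ t+2` this breaks the gap of `3` above the even entry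
`π^{(2)}_p`; for `t' = t+1`, the starting type `s₀` or `s₁` which `C_<` demands of `π^{(2)}_p`
contradicts condition (4) of `C_=`, resp. the marks of `2t`, `2t+1`, `2t+2`.

Conversely, for `m' > p + t` start at `q = p` and decrease `q` while `π^{(2)}_q ≤ 2(m'-q)+1`, or
`π^{(2)}_q = 2(m'-q)+2` has starting type `s₁`. Where this stops, `π ∈ C_<(k,r|q,m'-q)`, since an
even `2`-marked part exceeding all odd parts by more than one has starting type `s₁`, `s₂` or `s₃`.
-/

namespace Bressoud

/-- A partition: a weakly decreasing list of positive integers. -/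
structure Partition where
  parts : List ℕ
  pos : ∀ x ∈ parts, 0 < x
  sorted : parts.Pairwise (· ≥ ·)

namespace Partition

/-- `|π|`, the sum of the parts of `π`. -/
def size (π : Partition) : ℕ := π.parts.sum

/-- `ℓ(π)`, the number of parts of `π`. -/
def numParts (π : Partition) : ℕ := π.parts.length

end Partition

lemma exists_pos_not_mem (s : List ℕ) : ∃ n, 0 < n ∧ n ∉ s := by
  refine ⟨s.sum + 1, Nat.succ_pos _, fun h => ?_⟩
  have := List.single_le_sum (l := s) (fun x _ => Nat.zero_le x) _ h
  omega

/-- The least positive integer not occurring in `s`. -/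
def mex1 (s : List ℕ) : ℕ := Nat.find (exists_pos_not_mem s)

/-- Parts `p ≥ q` conflict (must receive different marks) when `p - q ≤ 2`,
with strict inequality when `p` is odd. -/
def conflict (p q : ℕ) : Bool :=
  if p % 2 = 1 then decide (p - q < 2) else decide (p - q ≤ 2)

/-- Greedy computation of the Göllnitz–Gordon marking: the parts are processed
from smallest to largest (second argument: remaining parts in increasing
order; first argument: already processed parts with their marks), and each
part receives the least positive mark different from the marks of all already
processed conflicting parts. -/
def ggAux : List (ℕ × ℕ) → List ℕ → List (ℕ × ℕ)
  | acc, [] => acc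
  | acc, p :: rest =>
      ggAux ((p, mex1 ((acc.filter fun q => conflict p q.1).map Prod.snd)) :: acc) rest

/-- The Göllnitz–Gordon marking `GG(π)` of `π`, as a list of (part, mark)
pairs in decreasing order of parts. -/
def ggMarks (π : Partition) : List (ℕ × ℕ) := ggAux [] π.parts.reverse

/-- There is an `m`-marked part equal to `x` in `GG(π)`. -/
def Marked (π : Partition) (x m : ℕ) : Prop := (x, m) ∈ ggMarks π

instance (π : Partition) (x m : ℕ) : Decidable (Marked π x m) := by
  unfold Marked; infer_instance

/-- The `i`-th row of `GG(π)`: the `i`-marked parts, in decreasing order. -/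
def row (π : Partition) (i : ℕ) : List ℕ :=
  ((ggMarks π).filter fun q => q.2 == i).map Prod.fst

/-- `N_i(π)`: the number of `i`-marked parts of `π`. -/
def Nmk (π : Partition) (i : ℕ) : ℕ := (row π i).length

/-- `π^{(i)}_j` as a natural number (meaningful for `1 ≤ j ≤ N_i(π)`;
junk value `0` otherwise). -/
def nth (π : Partition) (i j : ℕ) : ℕ := (row π i).getD (j - 1) 0

/-- The canonical embedding of the natural numbers into `EReal`. -/
noncomputable def natE (n : ℕ) : EReal := ((n : ℝ) : EReal)

/-- `π^{(i)}_j` as an extended real, with the conventions `π^{(i)}_0 = +∞`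
and `π^{(i)}_j = -∞` for `j > N_i(π)`. -/
noncomputable def rowVal (π : Partition) (i j : ℕ) : EReal :=
  if j = 0 then ⊤
  else
    match (row π i)[j - 1]? with
    | some x => natE x
    | none => ⊥

/-- The largest `l ≥ 0` such that there is no odd part of `π` greater than or
equal to `π^{(2)}_l` (the indices `1 ≤ j ≤ N₂(π)` with this property form an
initial segment, so this is also their number). -/
def bigL (π : Partition) : ℕ :=
  ((List.range' 1 (Nmk π 2)).filter fun j =>
    decide (∀ x ∈ π.parts, x % 2 = 1 → x < nth π 2 j)).length

/-- `startPair π b = (starting type of π^{(2)}_b, s_b(π))` for `1 ≤ b ≤ N₂(π)`.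
Starting types are encoded by integers: `-1` stands for `s₋₁`, and `0,1,2,3`
for `s₀,s₁,s₂,s₃`; the value `9` is a junk value used when no case applies. -/
def startPair (π : Partition) : ℕ → ℤ × ℕ
  | 0 => (9, 0)
  | b + 1 =>
    let v := nth π 2 (b + 1)
    if bigL π < b + 1 then (-1, 0)
    else
      let okLow : Bool :=
        if b = 0 then !decide ((v + 2) ∈ π.parts)
        else !decide (Marked π (v + 2) 1) || decide ((startPair π b).2 = v + 2)
      let ok2 : Bool :=
        if b = 0 then decide (Marked π (v + 2) 1)
        else decide (Marked π (v + 2) 1) && !decide ((startPair π b).2 = v + 2)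
      if decide (Marked π (v - 1) 1) && okLow then (0, v - 1)
      else if decide (Marked π (v - 2) 1) && okLow then (1, v - 2)
      else if ok2 then (2, v + 2)
      else if decide (Marked π v 1) then (3, v)
      else (9, 0)

/-- The starting type of `π^{(2)}_b`, encoded as an integer. -/
def startType (π : Partition) (b : ℕ) : ℤ := (startPair π b).1

/-- The set `C(k,r)`: partitions with no repeated odd part, in which the parts
equal to `1` and `2` have marks at most `r - 1`, and whose Göllnitz–Gordon
marking has at most `k - 1` rows. -/
def C (k r : ℕ) : Set Partition :=
  { π | (∀ x, x % 2 = 1 → π.parts.count x ≤ 1) ∧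
        (∀ x m, Marked π x m → x ≤ 2 → m ≤ r - 1) ∧
        (∀ x m, Marked π x m → m ≤ k - 1) }

/-- The set `C_<(k,r|p,t)`. -/
noncomputable def Clt (k r p t : ℕ) : Set Partition :=
  { π | π ∈ C k r ∧
        (∀ x ∈ π.parts, x % 2 = 1 → x < 2 * t + 1) ∧
        rowVal π 2 (p + 1) < natE (2 * t + 1) ∧
        natE (2 * t + 1) < rowVal π 2 p ∧
        (rowVal π 2 p = natE (2 * t + 2) →
          startType π p = 2 ∨ startType π p = 3) ∧
        (rowVal π 2 (p + 1) = natE (2 * t) →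
          startType π (p + 1) = 0 ∨ startType π (p + 1) = 1) }

/-- The set `C_=(k,r|p,t)`. -/
noncomputable def Ceq (k r p t : ℕ) : Set Partition :=
  { π | π ∈ C k r ∧
        (2 * t + 1) ∈ π.parts ∧
        (∀ x ∈ π.parts, x % 2 = 1 → x ≤ 2 * t + 1) ∧
        (∀ m, Marked π (2 * t + 1) m → m ≤ 2) ∧
        natE (2 * t + 2) ≤ rowVal π 2 p ∧
        rowVal π 2 (p + 1) ≤ natE (2 * t + 2) ∧
        ((∃ j, 1 ≤ j ∧ j ≤ Nmk π 2 ∧ nth π 2 j = 2 * t + 2 ∧ startType π j = 0) →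
          rowVal π 2 (p + 1) = natE (2 * t + 2) ∧
          ∃ i, 1 ≤ i ∧ i ≤ p + 1 ∧
            nth π 2 i = 2 * t + 2 + 4 * (p + 1 - i) ∧
            π.parts.count (2 * t + 2 + 4 * (p + 1 - i)) = 1) ∧
        ((∃ j, 1 ≤ j ∧ j ≤ Nmk π 2 ∧ nth π 2 j = 2 * t + 2 ∧ startType π j = 2) →
          rowVal π 2 p = natE (2 * t + 2)) ∧
        ((2 * t + 2) ∈ π.parts → ¬ Marked π (2 * t + 2) 2 →
          rowVal π 2 p = natE (2 * t + 4) ∧ startType π p = 3 ∧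
          ∃ i, 1 ≤ i ∧ i ≤ p ∧
            nth π 2 i = 2 * t + 4 + 4 * (p - i) ∧
            (2 * t + 4 + 4 * (p - i) + 2) ∉ π.parts) }

/-- The first starting cluster index `p₁` of `π` (with `p₀ = p + 1`): the least
`j ≥ 1` such that `π^{(2)}_j = π^{(2)}_p + 4(p - j)` and all of
`π^{(2)}_j, …, π^{(2)}_p` have the same starting type as `π^{(2)}_p`. -/
def firstCluster (π : Partition) (p : ℕ) : ℕ :=
  ((List.range' 1 p).filter fun j =>
    (List.range' j (p + 1 - j)).all fun i =>
      decide (nth π 2 i = nth π 2 p + 4 * (p - i)) &&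
      decide (startType π i = startType π p)).headD p

/-- The set `ℰ(k,r)` of partitions in `C(k,r)` with no odd parts. -/
def E (k r : ℕ) : Set Partition :=
  { π | π ∈ C k r ∧ ∀ x ∈ π.parts, x % 2 = 0 }

/-- `C_<(k,r|m) = ⋃_{p+t=m} C_<(k,r|p,t)`. -/
noncomputable def Cltm (k r m : ℕ) : Set Partition :=
  { π | ∃ p t, p + t = m ∧ π ∈ Clt k r p t }

/-- `C_=(k,r|m) = ⋃_{p+t=m} C_=(k,r|p,t)`. -/
noncomputable def Ceqm (k r m : ℕ) : Set Partition :=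
  { π | ∃ p t, p + t = m ∧ π ∈ Ceq k r p t }

/-- `I_N`: partitions into distinct odd parts, each at least `2N + 1`. -/
def Iset (N : ℕ) : Set Partition :=
  { ζ | (∀ x ∈ ζ.parts, x % 2 = 1 ∧ 2 * N + 1 ≤ x) ∧ ζ.parts.Nodup }

/-- `F(3,3)`: pairs `(π, ζ)` with `π ∈ ℰ(3,3)` and `ζ ∈ I_{N₂(π)}`. -/
noncomputable def F33 : Set (Partition × Partition) :=
  { pq | pq.1 ∈ E 3 3 ∧ pq.2 ∈ Iset (Nmk pq.1 2) }

lemma mex1_pos (s : List ℕ) : 0 < mex1 s := (Nat.find_spec (exists_pos_not_mem s)).1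

lemma mex1_not_mem (s : List ℕ) : mex1 s ∉ s := (Nat.find_spec (exists_pos_not_mem s)).2

lemma mem_of_lt_mex1 {s : List ℕ} {j : ℕ} (h0 : 0 < j) (hj : j < mex1 s) : j ∈ s := by
  simpa [h0] using Nat.find_min (exists_pos_not_mem s) hj

lemma conflict_iff_of_even {x y : ℕ} (hx : x % 2 = 0) : conflict x y = true ↔ x - y ≤ 2 := by
  simp [conflict, show x % 2 ≠ 1 by omega]

lemma conflict_iff_of_odd {x y : ℕ} (hx : x % 2 = 1) : conflict x y = true ↔ x - y < 2 := by
  simp [conflict, hx]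

/-- The invariant of the greedy construction `ggAux`, read on the output list (largest parts
first): each mark is the least positive one avoiding the marks of the later, conflicting entries. -/
def IsGreedy (l : List (ℕ × ℕ)) : Prop :=
  ∀ pre a post, l = pre ++ a :: post →
    a.2 = mex1 ((post.filter fun q => conflict a.1 q.1).map Prod.snd)

lemma IsGreedy.pairwise {l : List (ℕ × ℕ)} (h : IsGreedy l) :
    l.Pairwise fun a b => conflict a.1 b.1 = true → a.2 ≠ b.2 := by
  induction l with
  | nil => exact List.Pairwise.nil
  | cons a l ih =>
    refine List.Pairwise.cons (fun b hb hc heq => ?_)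
      (ih fun pre c post hl => h (a :: pre) c post (by simp [hl]))
    apply mex1_not_mem ((l.filter fun q => conflict a.1 q.1).map Prod.snd)
    rw [← h [] a l rfl, heq]
    exact List.mem_map.mpr ⟨b, List.mem_filter.mpr ⟨hb, hc⟩, rfl⟩

lemma ggAux_map_fst (rest : List ℕ) (acc : List (ℕ × ℕ)) :
    (ggAux acc rest).map Prod.fst = rest.reverse ++ acc.map Prod.fst := by
  induction rest generalizing acc with
  | nil => simp [ggAux]
  | cons p rest ih => simp [ggAux, ih]

lemma isGreedy_ggAux (rest : List ℕ) {acc : List (ℕ × ℕ)} (h : IsGreedy acc) :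
    IsGreedy (ggAux acc rest) := by
  induction rest generalizing acc with
  | nil => exact h
  | cons p rest ih =>
    refine ih ?_
    rintro (_ | ⟨b, pre⟩) a post hsplit
    · obtain ⟨rfl, rfl⟩ := List.cons_eq_cons.mp hsplit
      rfl
    · exact h pre a post (List.cons_eq_cons.mp hsplit).2

section Marking

variable (π : Partition)

lemma ggMarks_map_fst : (ggMarks π).map Prod.fst = π.parts := by
  simp [ggMarks, ggAux_map_fst]

lemma isGreedy_ggMarks : IsGreedy (ggMarks π) :=
  isGreedy_ggAux _ fun pre a post h => by simp at h

lemma ggMarks_pairwise_ge : (ggMarks π).Pairwise fun a b => a.1 ≥ b.1 :=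
  List.pairwise_map.mp ((ggMarks_map_fst π).symm ▸ π.sorted)

variable {π}

lemma exists_marked {x : ℕ} (h : x ∈ π.parts) : ∃ m, Marked π x m := by
  rw [← ggMarks_map_fst] at h
  obtain ⟨⟨y, m⟩, hm, rfl⟩ := List.mem_map.mp h
  exact ⟨m, hm⟩

namespace Marked

lemma mem_parts {x m : ℕ} (h : Marked π x m) : x ∈ π.parts := by
  rw [← ggMarks_map_fst]
  exact List.mem_map.mpr ⟨(x, m), h, rfl⟩

lemma pos {x m : ℕ} (h : Marked π x m) : 0 < m := by
  obtain ⟨pre, post, hsplit⟩ := List.append_of_mem h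
  have hm : m = _ := isGreedy_ggMarks π pre (x, m) post hsplit
  exact hm ▸ mex1_pos _

lemma ne_of_conflict {x mx y my : ℕ} (hx : Marked π x mx) (hy : Marked π y my)
    (hlt : y < x) (hc : conflict x y = true) : mx ≠ my := by
  have hpair := (ggMarks_pairwise_ge π).and (isGreedy_ggMarks π).pairwise
  obtain ⟨i, hi, hix⟩ := List.getElem_of_mem hx
  obtain ⟨j, hj, hjy⟩ := List.getElem_of_mem hy
  rcases lt_trichotomy i j with hij | rfl | hji
  · have := (List.pairwise_iff_getElem.mp hpair i j hi hj hij).2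
    simp only [hix, hjy] at this
    exact this hc
  · simp_all
  · have := (List.pairwise_iff_getElem.mp hpair j i hj hi hji).1
    simp only [hix, hjy] at this
    omega

lemma exists_lower {x m j : ℕ} (hx : Marked π x m) (h0 : 0 < j) (hj : j < m) :
    ∃ y, y ≤ x ∧ conflict x y = true ∧ Marked π y j := by
  obtain ⟨pre, post, hsplit⟩ := List.append_of_mem hx
  have hm : m = _ := isGreedy_ggMarks π pre (x, m) post hsplit
  rw [hm] at hj
  obtain ⟨⟨y, j'⟩, hq, rfl⟩ := List.mem_map.mp (mem_of_lt_mex1 h0 hj)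
  obtain ⟨hqpost, hcq⟩ := List.mem_filter.mp hq
  have hsorted := ggMarks_pairwise_ge π
  rw [hsplit] at hsorted
  refine ⟨y, (List.pairwise_cons.mp (List.pairwise_append.mp hsorted).2.1).1 _ hqpost, hcq, ?_⟩
  rw [Marked, hsplit]
  simp [hqpost]

end Marked

end Marking

section Rows

variable (π : Partition) (i : ℕ)

lemma mem_row_iff {x : ℕ} : x ∈ row π i ↔ Marked π x i := by
  simp [row, Marked]

lemma row_pairwise_ge : (row π i).Pairwise (· ≥ ·) :=
  List.pairwise_map.mpr ((ggMarks_pairwise_ge π).sublist List.filter_sublist)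

lemma row_pairwise_not_conflict : (row π i).Pairwise fun a b => conflict a b = false := by
  refine List.pairwise_map.mpr
    (((isGreedy_ggMarks π).pairwise.sublist List.filter_sublist).imp_of_mem ?_)
  intro a b ha hb h
  simp only [List.mem_filter, beq_iff_eq] at ha hb
  simpa [ha.2, hb.2] using h

variable {π i} {j : ℕ}

lemma nth_eq_getElem (h1 : 1 ≤ j) (h2 : j ≤ Nmk π i) :
    nth π i j = (row π i)[j - 1]'(by unfold Nmk at h2; omega) := by
  rw [nth, List.getD_eq_getElem]

lemma marked_nth (h1 : 1 ≤ j) (h2 : j ≤ Nmk π i) : Marked π (nth π i j) i := by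
  rw [← mem_row_iff, nth_eq_getElem h1 h2]
  exact List.getElem_mem _

lemma nth_eq_zero (h : Nmk π i < j) : nth π i j = 0 := by
  rw [nth, List.getD_eq_default]
  unfold Nmk at h
  omega

lemma le_Nmk_of_nth_pos (h : 0 < nth π i j) : j ≤ Nmk π i := by
  by_contra hc
  rw [nth_eq_zero (by omega)] at h
  omega

lemma nth_succ_le_and_not_conflict (h1 : 1 ≤ j) (h2 : j + 1 ≤ Nmk π i) :
    nth π i (j + 1) ≤ nth π i j ∧ conflict (nth π i j) (nth π i (j + 1)) = false := by
  have hlen : j < (row π i).length := by unfold Nmk at h2; omega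
  rw [nth_eq_getElem h1 (by omega), nth_eq_getElem (by omega) h2]
  simp only [Nat.add_sub_cancel]
  exact ⟨List.pairwise_iff_getElem.mp (row_pairwise_ge π i) _ _ _ hlen (by omega),
    List.pairwise_iff_getElem.mp (row_pairwise_not_conflict π i) _ _ _ hlen (by omega)⟩

lemma nth_succ_add_two_le (h1 : 1 ≤ j) (h2 : j + 1 ≤ Nmk π i) :
    nth π i (j + 1) + 2 ≤ nth π i j := by
  obtain ⟨hle, hnc⟩ := nth_succ_le_and_not_conflict h1 h2
  unfold conflict at hnc
  split at hnc <;> simp only [decide_eq_false_iff_not] at hnc <;> omega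

lemma nth_succ_add_three_le_of_even (h1 : 1 ≤ j) (h2 : j + 1 ≤ Nmk π i)
    (heven : nth π i (j + 1) % 2 = 0) : nth π i (j + 1) + 3 ≤ nth π i j := by
  obtain ⟨hle, hnc⟩ := nth_succ_le_and_not_conflict h1 h2
  unfold conflict at hnc
  split at hnc <;> simp only [decide_eq_false_iff_not] at hnc <;> omega

lemma nth_add_two_mul_le {a b : ℕ} (ha : 1 ≤ a) (hab : a ≤ b) (hb : b ≤ Nmk π i) :
    nth π i b + 2 * (b - a) ≤ nth π i a := by
  induction b, hab using Nat.le_induction with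
  | base => simp
  | succ n hn ih =>
    have := nth_succ_add_two_le (i := i) (by omega) hb
    have := ih (by omega)
    omega

end Rows

lemma natE_lt_natE {a b : ℕ} : natE a < natE b ↔ a < b := by simp [natE]

lemma natE_le_natE {a b : ℕ} : natE a ≤ natE b ↔ a ≤ b := by simp [natE]

lemma natE_lt_top (a : ℕ) : natE a < ⊤ := EReal.coe_lt_top _

lemma bot_lt_natE (a : ℕ) : ⊥ < natE a := EReal.bot_lt_coe _

section RowVal

variable {π : Partition} {i j x : ℕ}

@[simp]
lemma rowVal_zero : rowVal π i 0 = ⊤ := rfl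

lemma rowVal_of_le (h1 : 1 ≤ j) (h2 : j ≤ Nmk π i) : rowVal π i j = natE (nth π i j) := by
  rw [rowVal, if_neg (by omega), nth_eq_getElem h1 h2,
    List.getElem?_eq_getElem (by unfold Nmk at h2; omega)]

lemma rowVal_of_lt (h : Nmk π i < j) : rowVal π i j = ⊥ := by
  rw [rowVal, if_neg (by omega), List.getElem?_eq_none (by unfold Nmk at h; omega)]

-- Past the end of a row `rowVal` is `⊥` and `nth` is `0`, so these comparisons need no
-- bound on `j` as long as `x` is positive.
lemma natE_lt_rowVal (h1 : 1 ≤ j) : natE x < rowVal π i j ↔ x < nth π i j := by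
  rcases le_or_gt j (Nmk π i) with h2 | h2
  · rw [rowVal_of_le h1 h2, natE_lt_natE]
  · simp [rowVal_of_lt h2, nth_eq_zero h2]

lemma natE_le_rowVal (h1 : 1 ≤ j) (hx : 0 < x) : natE x ≤ rowVal π i j ↔ x ≤ nth π i j := by
  rcases le_or_gt j (Nmk π i) with h2 | h2
  · rw [rowVal_of_le h1 h2, natE_le_natE]
  · simp [rowVal_of_lt h2, nth_eq_zero h2, (bot_lt_natE x).ne', hx.ne']

lemma rowVal_lt_natE (h1 : 1 ≤ j) (hx : 0 < x) : rowVal π i j < natE x ↔ nth π i j < x := by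
  rcases le_or_gt j (Nmk π i) with h2 | h2
  · rw [rowVal_of_le h1 h2, natE_lt_natE]
  · simp [rowVal_of_lt h2, nth_eq_zero h2, bot_lt_natE, hx]

lemma rowVal_le_natE (h1 : 1 ≤ j) : rowVal π i j ≤ natE x ↔ nth π i j ≤ x := by
  rcases le_or_gt j (Nmk π i) with h2 | h2
  · rw [rowVal_of_le h1 h2, natE_le_natE]
  · simp [rowVal_of_lt h2, nth_eq_zero h2]

lemma rowVal_eq_natE (h1 : 1 ≤ j) (hx : 0 < x) : rowVal π i j = natE x ↔ nth π i j = x := by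
  rw [le_antisymm_iff, rowVal_le_natE h1, natE_le_rowVal h1 hx]
  omega

lemma rowVal_succ_lt (hj : j ≤ Nmk π i) : rowVal π i (j + 1) < rowVal π i j := by
  rcases le_or_gt (j + 1) (Nmk π i) with hN | hN
  · rw [rowVal_of_le (by omega) hN]
    rcases Nat.eq_zero_or_pos j with rfl | hj0
    · exact natE_lt_top _
    · rw [rowVal_of_le hj0 hj, natE_lt_natE]
      have := nth_succ_add_two_le hj0 hN
      omega
  · rw [rowVal_of_lt hN]
    rcases Nat.eq_zero_or_pos j with rfl | hj0
    · simp
    · rw [rowVal_of_le hj0 hj]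
      exact bot_lt_natE _

end RowVal

lemma le_bigL {π : Partition} {b : ℕ} (hb : b ≤ Nmk π 2)
    (h : ∀ x ∈ π.parts, x % 2 = 1 → x < nth π 2 b) : b ≤ bigL π := by
  have hsplit : List.range' 1 (Nmk π 2) =
      List.range' 1 b ++ List.range' (1 + 1 * b) (Nmk π 2 - b) := by
    rw [List.range'_append, Nat.add_sub_of_le hb]
  have hfilter : (List.range' 1 b).filter
      (fun j => decide (∀ x ∈ π.parts, x % 2 = 1 → x < nth π 2 j)) = List.range' 1 b := by
    refine List.filter_eq_self.mpr fun j hj => decide_eq_true fun x hx hodd => ?_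
    rw [List.mem_range'] at hj
    have := nth_add_two_mul_le (i := 2) (a := j) (b := b) (by omega) (by omega) hb
    have := h x hx hodd
    omega
  rw [bigL, hsplit, List.filter_append, List.length_append, hfilter]
  simp

section StartType

variable {π : Partition} {j : ℕ}

lemma marked_sub_one_of_startType_eq_zero (h : startType π j = 0) :
    Marked π (nth π 2 j - 1) 1 := by
  cases j with
  | zero => simp [startType, startPair] at h
  | succ b =>
    rw [startType, startPair] at h
    dsimp only at h
    split_ifs at h <;> simp_all

lemma marked_sub_two_of_startType_eq_one (h : startType π j = 1) :
    Marked π (nth π 2 j - 2) 1 := by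
  cases j with
  | zero => simp [startType, startPair] at h
  | succ b =>
    rw [startType, startPair] at h
    dsimp only at h
    split_ifs at h <;> simp_all

lemma marked_of_startType_eq_three (h : startType π j = 3) : Marked π (nth π 2 j) 1 := by
  cases j with
  | zero => simp [startType, startPair] at h
  | succ b =>
    rw [startType, startPair] at h
    dsimp only at h
    split_ifs at h <;> simp_all

lemma marked_one_of_add_two_not_marked_one {v : ℕ} (heven : v % 2 = 0)
    (hsucc : v + 1 ∉ π.parts) (hmem : v + 2 ∈ π.parts) (hne : ¬ Marked π (v + 2) 1) :
    Marked π v 1 := by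
  obtain ⟨m, hm⟩ := exists_marked hmem
  have : m ≠ 1 := fun h => hne (h ▸ hm)
  obtain ⟨y, hyv, hyc, hy⟩ := hm.exists_lower one_pos (by have := hm.pos; omega)
  have hy' := (conflict_iff_of_even (by omega)).mp hyc
  obtain rfl | rfl | rfl : y = v ∨ y = v + 1 ∨ y = v + 2 := by omega
  · exact hy
  · exact absurd hy.mem_parts hsucc
  · exact absurd hy hne

lemma startType_cases (h1 : 1 ≤ j) (h2 : j ≤ Nmk π 2) (hL : j ≤ bigL π)
    (heven : nth π 2 j % 2 = 0) (hsucc : nth π 2 j + 1 ∉ π.parts) :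
    startType π j = 0 ∨ startType π j = 1 ∨ startType π j = 2 ∨ startType π j = 3 := by
  obtain ⟨b, rfl⟩ : ∃ b, j = b + 1 := ⟨j - 1, by omega⟩
  obtain ⟨y, hyv, hyc, hy⟩ := (marked_nth (i := 2) h1 h2).exists_lower one_pos one_lt_two
  have hlow : Marked π (nth π 2 (b + 1) - 1) 1 ∨ Marked π (nth π 2 (b + 1) - 2) 1 ∨
      Marked π (nth π 2 (b + 1)) 1 := by
    have := (conflict_iff_of_even heven).mp hyc
    obtain rfl | rfl | rfl : y = nth π 2 (b + 1) - 1 ∨ y = nth π 2 (b + 1) - 2 ∨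
      y = nth π 2 (b + 1) := by omega
    all_goals tauto
  have hnext := marked_one_of_add_two_not_marked_one heven hsucc
  rw [startType, startPair, if_neg (by omega)]
  dsimp only
  split_ifs <;> simp_all
  tauto

lemma startType_eq_one_or_two_or_three (h1 : 1 ≤ j) (h2 : j ≤ Nmk π 2)
    (heven : nth π 2 j % 2 = 0) (hodd : ∀ x ∈ π.parts, x % 2 = 1 → x + 1 < nth π 2 j) :
    startType π j = 1 ∨ startType π j = 2 ∨ startType π j = 3 := by
  have hpos : 0 < nth π 2 j := π.pos _ (marked_nth h1 h2).mem_parts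
  have hL : j ≤ bigL π := le_bigL h2 fun x hx hx' => by have := hodd x hx hx'; omega
  have hsucc : nth π 2 j + 1 ∉ π.parts := fun hx => by have := hodd _ hx (by omega); omega
  rcases startType_cases h1 h2 hL heven hsucc with h0 | h
  · have hx := (marked_sub_one_of_startType_eq_zero h0).mem_parts
    have := hodd _ hx (by omega)
    omega
  · exact h

end StartType

section Clt

variable {π : Partition} {k r : ℕ}

lemma mem_Clt_of_startType_ne_one {q t' : ℕ} (hC : π ∈ C k r)
    (hodd : ∀ x ∈ π.parts, x % 2 = 1 → x < 2 * t' + 1)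
    (hlt : rowVal π 2 (q + 1) < natE (2 * t' + 1)) (hgt : natE (2 * t' + 1) < rowVal π 2 q)
    (hne : rowVal π 2 q = natE (2 * t' + 2) → startType π q ≠ 1)
    (htype : rowVal π 2 (q + 1) = natE (2 * t') →
      startType π (q + 1) = 0 ∨ startType π (q + 1) = 1) :
    π ∈ Clt k r q t' := by
  refine ⟨hC, hodd, hlt, hgt, fun heq => ?_, htype⟩
  have hq : 1 ≤ q := Nat.one_le_iff_ne_zero.mpr fun hq => by
    rw [hq, rowVal_zero] at heq
    exact (natE_lt_top _).ne' heq
  have hnth := (rowVal_eq_natE hq (by omega)).mp heq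
  have hqN : q ≤ Nmk π 2 := le_Nmk_of_nth_pos (by omega)
  have := startType_eq_one_or_two_or_three hq hqN (by omega)
    fun x hx hx' => by have := hodd x hx hx'; omega
  have := hne heq
  tauto

lemma mem_Cltm_of_rowVal_succ_lt {m' q : ℕ} (hC : π ∈ C k r) (hq : q ≤ m')
    (hodd : ∀ x ∈ π.parts, x % 2 = 1 → x < 2 * (m' - q) + 1)
    (hlt : rowVal π 2 (q + 1) < natE (2 * (m' - q) + 1))
    (htype : rowVal π 2 (q + 1) = natE (2 * (m' - q)) →
      startType π (q + 1) = 0 ∨ startType π (q + 1) = 1) :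
    π ∈ Cltm k r m' := by
  induction q with
  | zero =>
    refine ⟨0, m', by omega, mem_Clt_of_startType_ne_one hC ?_ ?_ ?_ ?_ ?_⟩ <;>
      simp_all [natE_lt_top, (natE_lt_top _).ne']
  | succ q ih =>
    by_cases hskip : nth π 2 (q + 1) ≤ 2 * (m' - (q + 1)) + 1 ∨
        (nth π 2 (q + 1) = 2 * (m' - (q + 1)) + 2 ∧ startType π (q + 1) = 1)
    · refine ih (by omega) (fun x hx hx' => by have := hodd x hx hx'; omega) ?_ fun heq => ?_
      · rw [rowVal_lt_natE (by omega) (by omega)]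
        omega
      · rw [rowVal_eq_natE (by omega) (by omega)] at heq
        omega
    · refine ⟨q + 1, m' - (q + 1), by omega, mem_Clt_of_startType_ne_one hC hodd hlt ?_ ?_ htype⟩
      · rw [natE_lt_rowVal (by omega)]
        omega
      · rw [rowVal_eq_natE (by omega) (by omega)]
        omega

end Clt

section Ceq

variable {π : Partition} {k r p t : ℕ}

lemma le_nth_of_mem_Ceq (h : π ∈ Ceq k r p t) (hp : 1 ≤ p) : 2 * t + 2 ≤ nth π 2 p := by
  obtain ⟨-, -, -, -, hrow, -⟩ := h
  exact (natE_le_rowVal hp (by omega)).mp hrow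

lemma le_Nmk_of_mem_Ceq (h : π ∈ Ceq k r p t) : p ≤ Nmk π 2 := by
  rcases Nat.eq_zero_or_pos p with rfl | hp
  · omega
  · exact le_Nmk_of_nth_pos (by have := le_nth_of_mem_Ceq h hp; omega)

lemma marked_one_of_mem_Ceq (h : π ∈ Ceq k r p t) (h2 : Marked π (2 * t + 2) 2) :
    Marked π (2 * t + 1) 1 := by
  obtain ⟨-, h2t1, -, hmark, -⟩ := h
  obtain ⟨m, hm⟩ := exists_marked h2t1
  have hne := h2.ne_of_conflict hm (by omega) ((conflict_iff_of_even (by omega)).mpr (by omega))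
  have := hmark m hm
  have := hm.pos
  obtain rfl : m = 1 := by omega
  exact hm

lemma startType_ne_one_of_mem_Ceq (h : π ∈ Ceq k r p t) {j : ℕ} (h1 : 1 ≤ j)
    (h2 : j ≤ Nmk π 2) (heq : nth π 2 j = 2 * t + 2) : startType π j ≠ 1 := by
  intro htype
  have h2t := marked_sub_two_of_startType_eq_one htype
  have h2t1 := marked_one_of_mem_Ceq h (heq ▸ marked_nth h1 h2)
  rw [heq, show 2 * t + 2 - 2 = 2 * t by omega] at h2t
  exact h2t1.ne_of_conflict h2t (by omega) ((conflict_iff_of_odd (by omega)).mpr (by omega)) rfl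

lemma startType_succ_of_mem_Ceq (h : π ∈ Ceq k r p t) (hN : p + 1 ≤ Nmk π 2)
    (heq : nth π 2 (p + 1) = 2 * t + 2) :
    startType π (p + 1) = 0 ∨ startType π (p + 1) = 1 := by
  have hv2 : Marked π (2 * t + 2) 2 := heq ▸ marked_nth (by omega) hN
  have hv1 : ¬ Marked π (2 * t + 2) 1 := fun hv =>
    hv.ne_of_conflict (marked_one_of_mem_Ceq h hv2) (by omega)
      ((conflict_iff_of_even (by omega)).mpr (by omega)) rfl
  obtain ⟨-, -, hodd, -, -, -, -, hC5, -⟩ := h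
  have hL : p + 1 ≤ bigL π := le_bigL hN fun x hx hx' => by have := hodd x hx hx'; omega
  rcases startType_cases (by omega) hN hL (by omega)
    (fun hx => by have := hodd _ hx (by omega); omega) with h0 | h1 | h2 | h3
  · exact Or.inl h0
  · exact Or.inr h1
  · have := hC5 ⟨p + 1, by omega, hN, heq, h2⟩
    have := rowVal_succ_lt (i := 2) (by omega : p ≤ Nmk π 2)
    simp_all [rowVal_of_le (by omega : 1 ≤ p + 1) hN]
  · exact absurd (heq ▸ marked_of_startType_eq_three h3) hv1

lemma add_lt_add_of_mem_Ceq_of_mem_Clt {p' t' : ℕ} (h : π ∈ Ceq k r p t)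
    (h' : π ∈ Clt k r p' t') : p + t < p' + t' := by
  have htt' : t < t' := by have := h'.2.1 _ h.2.1 (by omega); omega
  by_contra! hle
  have hp : 1 ≤ p := by omega
  have hpN := le_Nmk_of_mem_Ceq h
  have hnthp := le_nth_of_mem_Ceq h hp
  have hnth' : nth π 2 (p' + 1) < 2 * t' + 1 :=
    (rowVal_lt_natE (by omega) (by omega)).mp h'.2.2.1
  have hchain := nth_add_two_mul_le (i := 2) (a := p' + 1) (b := p) (by omega) (by omega) hpN
  -- the row drops by at least 2 per step, which leaves no room between the two bounds
  have hpp : p = p' + (t' - t) := by omega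
  have hnthp_eq : nth π 2 p = 2 * t + 2 := by omega
  rcases Nat.lt_or_ge (t + 1) t' with hgap | hgap
  · have hparity := nth_succ_add_three_le_of_even (π := π) (i := 2) (j := p - 1) (by omega)
      (by omega) (by rw [Nat.sub_add_cancel hp]; omega)
    rw [Nat.sub_add_cancel hp] at hparity
    have := nth_add_two_mul_le (π := π) (i := 2) (a := p' + 1) (b := p - 1) (by omega)
      (by omega) (by omega)
    omega
  · have hp' : p' + 1 = p := by omega
    have hrow : rowVal π 2 p = natE (2 * t + 2) := by rw [rowVal_of_le hp hpN, hnthp_eq]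
    obtain ⟨-, -, -, -, -, htype⟩ := h'
    rw [hp'] at htype
    rcases htype (by rw [hrow]; congr 2; omega) with h0 | h1
    · have := (h.2.2.2.2.2.2.1 ⟨_, hp, hpN, hnthp_eq, h0⟩).1
      exact (rowVal_succ_lt (i := 2) hpN).ne (this.trans hrow.symm)
    · exact startType_ne_one_of_mem_Ceq h hp hpN hnthp_eq h1

lemma mem_Cltm_of_mem_Ceq {m' : ℕ} (h : π ∈ Ceq k r p t) (hm : p + t < m') :
    π ∈ Cltm k r m' := by
  obtain ⟨hC, -, hodd, -, -, hrow, -⟩ := id h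
  refine mem_Cltm_of_rowVal_succ_lt hC (q := p) (by omega)
    (fun x hx hx' => by have := hodd x hx hx'; omega)
    (hrow.trans_lt (natE_lt_natE.mpr (by omega))) fun heq => ?_
  have hnth := (rowVal_eq_natE (by omega) (by omega)).mp heq
  have := (rowVal_le_natE (by omega)).mp hrow
  exact startType_succ_of_mem_Ceq h (le_Nmk_of_nth_pos (by omega)) (by omega)

end Ceq

theorem Ceqm_mem_Cltm_iff_general (k r m m' : ℕ)
    (π : Partition) (hπ : π ∈ Ceqm k r m) :
    π ∈ Cltm k r m' ↔ m < m' := by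
  obtain ⟨p, t, rfl, h⟩ := hπ
  constructor
  · rintro ⟨p', t', rfl, h'⟩
    exact add_lt_add_of_mem_Ceq_of_mem_Clt h h'
  · exact mem_Cltm_of_mem_Ceq h

/-- Theorem 5.7: for `π ∈ C_=(k,r|m)`, we have `π ∈ C_<(k,r|m')` if and only
if `m < m'`. -/
theorem Ceqm_mem_Cltm_iff (k r m m' : ℕ) (hrk : r ≤ k) (hr : 3 ≤ r)
    (π : Partition) (hπ : π ∈ Ceqm k r m) :
    π ∈ Cltm k r m' ↔ m < m' :=
  Ceqm_mem_Cltm_iff_general k r m m' π hπ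

end Bressoud
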